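/- An adjunction F : C ⇄ D : G between model categories is a Quillen adjunction provided that F preserves cofibrations and G preserves fibrations between fibrant objects. -/

import Mathlib

/-!
For a trivial cofibration `f`, the cofibration `F f` has, by adjunction, the left lifting property
against every fibration between fibrant objects. Any map `i : A ⟶ B` with this property is a weak
equivalence: choose a fibrant replacement `j : B ⟶ RB` and factor `i ≫ j` as a trivial cofibration
followed by a fibration `q` between fibrant objects; lifting `i` and then `j` against `q` exhibits
`i ≫ j` as a retract of that trivial cofibration, and two-out-of-three finishes.
-/

open CategoryTheory CategoryTheory.Limits

universe v u

/-- `f` is a retract of `g` in the arrow category. -/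
def RetractOf {C : Type u} [Category.{v} C] {X Y Z W : C} (f : X ⟶ Y) (g : Z ⟶ W) : Prop :=
  ∃ (i : X ⟶ Z) (r : Z ⟶ X) (i' : Y ⟶ W) (r' : W ⟶ Y),
    i ≫ r = 𝟙 X ∧ i' ≫ r' = 𝟙 Y ∧ i ≫ g = f ≫ i' ∧ g ≫ r' = r ≫ f

/-- A (Quillen) model structure on a category `C`: classes of weak equivalences,
cofibrations and fibrations satisfying two-out-of-three, retract closure,
lifting and factorization axioms. -/
structure ModelStructure (C : Type u) [Category.{v} C] where
  W : MorphismProperty C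
  Cof : MorphismProperty C
  Fib : MorphismProperty C
  W_id : ∀ X : C, W (𝟙 X)
  W_comp : ∀ {X Y Z : C} (f : X ⟶ Y) (g : Y ⟶ Z), W f → W g → W (f ≫ g)
  W_cancel_left : ∀ {X Y Z : C} (f : X ⟶ Y) (g : Y ⟶ Z), W g → W (f ≫ g) → W f
  W_cancel_right : ∀ {X Y Z : C} (f : X ⟶ Y) (g : Y ⟶ Z), W f → W (f ≫ g) → W g
  W_retract : ∀ {X Y Z W' : C} {f : X ⟶ Y} {g : Z ⟶ W'}, RetractOf f g → W g → W f
  Cof_retract : ∀ {X Y Z W' : C} {f : X ⟶ Y} {g : Z ⟶ W'}, RetractOf f g → Cof g → Cof f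
  Fib_retract : ∀ {X Y Z W' : C} {f : X ⟶ Y} {g : Z ⟶ W'}, RetractOf f g → Fib g → Fib f
  lift_cof_trivFib : ∀ {A B X Y : C} (i : A ⟶ B) (p : X ⟶ Y),
    Cof i → Fib p → W p → HasLiftingProperty i p
  lift_trivCof_fib : ∀ {A B X Y : C} (i : A ⟶ B) (p : X ⟶ Y),
    Cof i → W i → Fib p → HasLiftingProperty i p
  factor_cof_trivFib : ∀ {X Y : C} (f : X ⟶ Y),
    ∃ (Z : C) (i : X ⟶ Z) (p : Z ⟶ Y), Cof i ∧ Fib p ∧ W p ∧ i ≫ p = f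
  factor_trivCof_fib : ∀ {X Y : C} (f : X ⟶ Y),
    ∃ (Z : C) (i : X ⟶ Z) (p : Z ⟶ Y), Cof i ∧ W i ∧ Fib p ∧ i ≫ p = f

namespace ModelStructure

variable {E : Type u} [Category.{v} E] (M : ModelStructure E)

theorem fib_of_hasLiftingProperty {X Y : E} (p : X ⟶ Y)
    (h : ∀ {A B : E} (i : A ⟶ B), M.Cof i → M.W i → HasLiftingProperty i p) : M.Fib p := by
  obtain ⟨Z, i, q, hi_cof, hi_w, hq, rfl⟩ := M.factor_trivCof_fib p
  have := h i hi_cof hi_w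
  have sq : CommSq (𝟙 X) i (i ≫ q) q := ⟨by simp⟩
  exact M.Fib_retract ⟨i, sq.lift, 𝟙 Y, 𝟙 Y, sq.fac_left, by simp, by simp, by simp⟩ hq

theorem fib_comp {X Y Z : E} {p : X ⟶ Y} {q : Y ⟶ Z} (hp : M.Fib p) (hq : M.Fib q) :
    M.Fib (p ≫ q) :=
  M.fib_of_hasLiftingProperty _ fun i hi_cof hi_w =>
    have := M.lift_trivCof_fib i p hi_cof hi_w hp
    have := M.lift_trivCof_fib i q hi_cof hi_w hq
    inferInstance

variable [HasTerminal E]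

def IsFibrant (X : E) : Prop :=
  M.Fib (terminal.from X)

theorem isFibrant_of_fib {X Y : E} {p : X ⟶ Y} (hp : M.Fib p) (hY : M.IsFibrant Y) :
    M.IsFibrant X := by
  rw [IsFibrant, ← terminal.comp_from p]
  exact M.fib_comp hp hY

theorem exists_trivCof_isFibrant (X : E) :
    ∃ (RX : E) (j : X ⟶ RX), M.Cof j ∧ M.W j ∧ M.IsFibrant RX := by
  obtain ⟨RX, j, p, hj_cof, hj_w, hp, -⟩ := M.factor_trivCof_fib (terminal.from X)
  refine ⟨RX, j, hj_cof, hj_w, ?_⟩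
  rwa [IsFibrant, ← terminal.hom_ext p (terminal.from RX)]

theorem W_of_hasLiftingProperty {A B : E} (i : A ⟶ B)
    (h : ∀ {X Y : E} (p : X ⟶ Y), M.IsFibrant X → M.IsFibrant Y → M.Fib p →
      HasLiftingProperty i p) :
    M.W i := by
  obtain ⟨RB, j, hj_cof, hj_w, hRB⟩ := M.exists_trivCof_isFibrant B
  obtain ⟨RA, jA, q, hjA_cof, hjA_w, hq, hfac⟩ := M.factor_trivCof_fib (i ≫ j)
  have := h q (M.isFibrant_of_fib hq hRB) hRB hq
  have sq_i : CommSq jA i q j := ⟨hfac⟩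
  have := M.lift_trivCof_fib j q hj_cof hj_w hq
  have sq_j : CommSq sq_i.lift j q (𝟙 RB) := ⟨by simp⟩
  have h_retract : RetractOf (i ≫ j) jA :=
    ⟨𝟙 A, 𝟙 A, sq_j.lift, q, by simp, sq_j.fac_right,
      by simp [sq_j.fac_left, sq_i.fac_left], by simp [hfac]⟩
  exact M.W_cancel_left i j hj_w (M.W_retract h_retract hjA_w)

end ModelStructure

theorem quillen_adjunction_criterion_general
    {C : Type u} [Category.{v} C]
    {D : Type u} [Category.{v} D] [HasLimits D]
    (MC : ModelStructure C) (MD : ModelStructure D)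
    (F : C ⥤ D) (U : D ⥤ C) (adj : F ⊣ U)
    (hF : ∀ {A B : C} (f : A ⟶ B), MC.Cof f → MD.Cof (F.map f))
    (hU : ∀ {X Y : D} (p : X ⟶ Y),
      MD.Fib (terminal.from X) → MD.Fib (terminal.from Y) → MD.Fib p →
        MC.Fib (U.map p)) :
    (∀ {A B : C} (f : A ⟶ B), MC.Cof f → MD.Cof (F.map f)) ∧
    (∀ {A B : C} (f : A ⟶ B), MC.Cof f → MC.W f →
      MD.Cof (F.map f) ∧ MD.W (F.map f)) := by
  refine ⟨hF, fun f hf_cof hf_w => ⟨hF f hf_cof, ?_⟩⟩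
  refine MD.W_of_hasLiftingProperty (F.map f) fun p hX hY hp => ?_
  rw [adj.hasLiftingProperty_iff]
  exact MC.lift_trivCof_fib f (U.map p) hf_cof hf_w (hU p hX hY hp)

/-- **Criterion for Quillen adjunctions.** An adjunction `F ⊣ U` between model
categories is a Quillen adjunction (i.e. `F` preserves cofibrations and trivial
cofibrations) provided that `F` preserves cofibrations and `U` preserves
fibrations between fibrant objects. -/
theorem quillen_adjunction_criterion
    {C : Type u} [Category.{v} C] [HasLimits C] [HasColimits C]
    {D : Type u} [Category.{v} D] [HasLimits D] [HasColimits D]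
    (MC : ModelStructure C) (MD : ModelStructure D)
    (F : C ⥤ D) (U : D ⥤ C) (adj : F ⊣ U)
    (hF : ∀ {A B : C} (f : A ⟶ B), MC.Cof f → MD.Cof (F.map f))
    (hU : ∀ {X Y : D} (p : X ⟶ Y),
      MD.Fib (terminal.from X) → MD.Fib (terminal.from Y) → MD.Fib p →
        MC.Fib (U.map p)) :
    (∀ {A B : C} (f : A ⟶ B), MC.Cof f → MD.Cof (F.map f)) ∧
    (∀ {A B : C} (f : A ⟶ B), MC.Cof f → MC.W f →
      MD.Cof (F.map f) ∧ MD.W (F.map f)) :=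
  quillen_adjunction_criterion_general MC MD F U adj hF hU
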